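/- arXiv:0806.0951 — 2 statements merged into one kernel-verified Lean document; each statement's English description precedes it below -/
import Mathlib

section
/- Let d > 0, p_S, p_G > 0, s_S, s_G, s_R ∈ ℝ, set p_R := (p_S + p_G)/p_G and assume s_R ≤ (p_S·s_S − p_G·s_G)/(p_S + p_G). For u ∈ B^{s_S}_{p_S} define the sequence g : Λ → ℝ by g_λ := p_R · 2^{p_R(s_R + d(1/2 − 1/p_R))·ℓ(λ)} · sign(u_λ)·|u_λ|^{p_R − 1} (the Gâteaux gradient of ‖·‖_{B^{s_R}_{p_R}}^{p_R} at u in wavelet coordinates). Then ‖g‖_{B^{s_G}_{p_G}}^{p_G} ≤ p_R^{p_G} · ‖u‖_{B^{s_S}_{p_S}}^{p_S}; in particular g ∈ B^{s_G}_{p_G}. -/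
open scoped ENNReal

/-- Besov sequence norm (wavelet characterization), valued in `ℝ≥0∞`. -/
noncomputable def besovNorm {Λ : Type*} (d : ℝ) (lev : Λ → ℕ) (s p : ℝ) (u : Λ → ℝ) : ℝ≥0∞ :=
  (∑' lam : Λ, ENNReal.ofReal
      ((2 : ℝ) ^ (p * (s + d * (1 / 2 - 1 / p)) * (lev lam : ℝ)) * |u lam| ^ p)) ^ (1 / p)

/-!
Since `p_R - 1 = p_S / p_G`, raising the termwise bound
`|g_λ| ≤ p_R 2^{a ℓ(λ)} |u_λ|^{p_R - 1}`, where `a = p_R (s_R + d (1/2 - 1/p_R))`, to the power `p_G`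
gives `|g_λ|^{p_G} ≤ p_R^{p_G} 2^{p_G a ℓ(λ)} |u_λ|^{p_S}`. The condition on `s_R` says exactly
that the level exponent of `B^{s_G}_{p_G}` plus `p_G a` is at most the level exponent of
`B^{s_S}_{p_S}` (the `d`-terms cancel), so the two weighted sums compare term by term.
-/

lemma besovNorm_rpow {Λ : Type*} (d : ℝ) (lev : Λ → ℕ) (s : ℝ) {p : ℝ} (hp : p ≠ 0)
    (u : Λ → ℝ) :
    besovNorm d lev s p u ^ p =
      ∑' lam : Λ, ENNReal.ofReal
        ((2 : ℝ) ^ (p * (s + d * (1 / 2 - 1 / p)) * (lev lam : ℝ)) * |u lam| ^ p) := by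
  rw [besovNorm, ← ENNReal.rpow_mul, one_div_mul_cancel hp, ENNReal.rpow_one]

lemma two_rpow_mul_abs_rpow_le {C a E E' p p' q x y : ℝ} {n : ℕ} (hC : 0 ≤ C) (hp : 0 < p)
    (hq : q * p = p') (hE : E + a * p ≤ E') (h : |x| ≤ C * (2 : ℝ) ^ (a * n) * |y| ^ q) :
    (2 : ℝ) ^ (E * n) * |x| ^ p ≤ C ^ p * ((2 : ℝ) ^ (E' * n) * |y| ^ p') := by
  calc (2 : ℝ) ^ (E * n) * |x| ^ p
      ≤ (2 : ℝ) ^ (E * n) * (C * (2 : ℝ) ^ (a * n) * |y| ^ q) ^ p := by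
        gcongr
    _ = C ^ p * ((2 : ℝ) ^ ((E + a * p) * n) * |y| ^ p') := by
        rw [Real.mul_rpow (by positivity) (by positivity), Real.mul_rpow hC (by positivity),
          ← Real.rpow_mul zero_le_two, ← Real.rpow_mul (abs_nonneg y), hq, add_mul,
          Real.rpow_add two_pos]
        ring_nf
    _ ≤ C ^ p * ((2 : ℝ) ^ (E' * n) * |y| ^ p') := by
        gcongr
        norm_num

theorem besovNorm_rpow_le_of_abs_le {Λ : Type*} {d : ℝ} {lev : Λ → ℕ} {s s' p p' C a q : ℝ}
    {g u : Λ → ℝ} (hC : 0 ≤ C) (hp : 0 < p) (hp' : p' ≠ 0) (hq : q * p = p')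
    (hE : p * (s + d * (1 / 2 - 1 / p)) + a * p ≤ p' * (s' + d * (1 / 2 - 1 / p')))
    (h : ∀ lam, |g lam| ≤ C * (2 : ℝ) ^ (a * (lev lam : ℝ)) * |u lam| ^ q) :
    besovNorm d lev s p g ^ p ≤ ENNReal.ofReal (C ^ p) * besovNorm d lev s' p' u ^ p' := by
  rw [besovNorm_rpow d lev s hp.ne', besovNorm_rpow d lev s' hp', ← ENNReal.tsum_mul_left]
  refine ENNReal.tsum_le_tsum fun lam => ?_
  rw [← ENNReal.ofReal_mul (by positivity)]
  exact ENNReal.ofReal_le_ofReal (two_rpow_mul_abs_rpow_le hC hp hq hE (h lam))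

lemma abs_mul_sign_mul_le {c y : ℝ} (x : ℝ) (hc : 0 ≤ c) (hy : 0 ≤ y) :
    |c * Real.sign x * y| ≤ c * y := by
  have hsign : |Real.sign x| ≤ 1 := by
    rcases Real.sign_apply_eq x with h | h | h <;> norm_num [h]
  rw [abs_mul, abs_mul, abs_of_nonneg hc, abs_of_nonneg hy]
  calc c * |Real.sign x| * y ≤ c * 1 * y := by gcongr
    _ = c * y := by ring

lemma gradient_weight_exponent_le {d pS pG sS sG sR pR : ℝ} (hpS : 0 < pS) (hpG : 0 < pG)
    (hpR : pR = (pS + pG) / pG) (hsR : sR ≤ (pS * sS - pG * sG) / (pS + pG)) :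
    pG * (sG + d * (1 / 2 - 1 / pG)) + pR * (sR + d * (1 / 2 - 1 / pR)) * pG ≤
      pS * (sS + d * (1 / 2 - 1 / pS)) := by
  have hpSG : 0 < pS + pG := by linarith
  have hsR' : sR * (pS + pG) ≤ pS * sS - pG * sG := (le_div_iff₀ hpSG).mp hsR
  subst hpR
  field_simp
  nlinarith

theorem gradient_in_BG_general {Λ : Type*} (d : ℝ) (lev : Λ → ℕ)
    (pS pG sS sG sR : ℝ) (hpS : 0 < pS) (hpG : 0 < pG)
    (pR : ℝ) (hpR : pR = (pS + pG) / pG)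
    (hsR : sR ≤ (pS * sS - pG * sG) / (pS + pG))
    (u : Λ → ℝ) (hu : besovNorm d lev sS pS u ≠ ⊤)
    (g : Λ → ℝ)
    (hg : ∀ lam : Λ, g lam =
      pR * (2 : ℝ) ^ (pR * (sR + d * (1 / 2 - 1 / pR)) * (lev lam : ℝ)) *
        Real.sign (u lam) * |u lam| ^ (pR - 1)) :
    (besovNorm d lev sG pG g) ^ pG ≤
        ENNReal.ofReal (pR ^ pG) * (besovNorm d lev sS pS u) ^ pS ∧
      besovNorm d lev sG pG g ≠ ⊤ := by
  have hpR0 : 0 < pR := by rw [hpR]; positivity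
  have hq : (pR - 1) * pG = pS := by rw [hpR]; field_simp; ring
  have hbound : besovNorm d lev sG pG g ^ pG ≤
      ENNReal.ofReal (pR ^ pG) * besovNorm d lev sS pS u ^ pS :=
    besovNorm_rpow_le_of_abs_le hpR0.le hpG hpS.ne' hq
      (gradient_weight_exponent_le hpS hpG hpR hsR)
      fun lam => (hg lam).symm ▸ abs_mul_sign_mul_le _ (by positivity) (by positivity)
  refine ⟨hbound, fun htop => ?_⟩
  have hrhs : ENNReal.ofReal (pR ^ pG) * besovNorm d lev sS pS u ^ pS ≠ ⊤ :=
    ENNReal.mul_ne_top ENNReal.ofReal_ne_top (ENNReal.rpow_ne_top_of_nonneg hpS.le hu)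
  exact ne_top_of_le_ne_top hrhs hbound (by rw [htop, ENNReal.top_rpow_of_pos hpG])

/-- Proposition 3.1: for `u ∈ B^{s_S}_{p_S}`, the Gâteaux gradient
`g_λ = p_R · 2^{p_R(s_R + d(1/2 − 1/p_R))·ℓ(λ)} · sign(u_λ)|u_λ|^{p_R−1}` of
`‖·‖_{B^{s_R}_{p_R}}^{p_R}` at `u` satisfies `‖g‖_{B^{s_G}_{p_G}}^{p_G} ≤ p_R^{p_G}‖u‖_{B^{s_S}_{p_S}}^{p_S}`;
in particular `g ∈ B^{s_G}_{p_G}`. -/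
theorem gradient_in_BG {Λ : Type*} [Countable Λ] (d : ℝ) (lev : Λ → ℕ)
    (pS pG sS sG sR : ℝ) (hd : 0 < d) (hpS : 0 < pS) (hpG : 0 < pG)
    (pR : ℝ) (hpR : pR = (pS + pG) / pG)
    (hsR : sR ≤ (pS * sS - pG * sG) / (pS + pG))
    (u : Λ → ℝ) (hu : besovNorm d lev sS pS u ≠ ⊤)
    (g : Λ → ℝ)
    (hg : ∀ lam : Λ, g lam =
      pR * (2 : ℝ) ^ (pR * (sR + d * (1 / 2 - 1 / pR)) * (lev lam : ℝ)) *
        Real.sign (u lam) * |u lam| ^ (pR - 1)) :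
    (besovNorm d lev sG pG g) ^ pG ≤
        ENNReal.ofReal (pR ^ pG) * (besovNorm d lev sS pS u) ^ pS ∧
      besovNorm d lev sG pG g ≠ ⊤ :=
  gradient_in_BG_general d lev pS pG sS sG sR hpS hpG pR hpR hsR u hu g hg
end

section
/- Let 1 < p_R ≤ 2, s_R ∈ ℝ, and set τ := s_R + d(1/2 − 1/p_R). Let C, L > 0 and let u†, v : Λ → ℝ satisfy 2^{τ·ℓ(λ)}|u†_λ| < C and 2^{τ·ℓ(λ)}|v_λ − u†_λ| < L for every λ ∈ Λ. Then there exists a constant K = K(p_R, C, L) > 0 such that the Bregman distance of the penalty ‖·‖_{B^{s_R}_{p_R}}^{p_R} satisfies Σ_{λ∈Λ} 2^{p_R·τ·ℓ(λ)}·(|v_λ|^{p_R} − |u†_λ|^{p_R} − p_R·sign(u†_λ)·|u†_λ|^{p_R−1}·(v_λ − u†_λ)) ≥ K·Σ_{λ∈Λ} 2^{2τ·ℓ(λ)}·|v_λ − u†_λ|² = K·‖v − u†‖²_{H^τ}. -/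
/-!
On `[-M, M]` the derivative `p · sign x · |x|^(p-1)` of `|x|^p` grows at rate at least
`p (p - 1) M^(p-2)`, because `|x|^(p-2)` is smallest at `|x| = M` when `p ≤ 2`. Hence `|x|^p` is
strongly convex there and its Bregman distance dominates `p (p - 1) / 2 · M^(p-2) (b - a)²`.
The Bregman distance is `p`-homogeneous, so after scaling the coordinates by `2^(τ ℓ(λ))` all
of them lie in `[-(C + L), C + L]`, and summing gives `K = p (p - 1) / 2 · (C + L)^(p-2)`.
-/

open scoped ENNReal

open Set

theorem add_deriv_mul_sub_le_of_monotoneOn {f f' : ℝ → ℝ} {s : Set ℝ} (hs : Convex ℝ s)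
    (hf : ∀ x ∈ s, HasDerivAt f (f' x) x) (hf' : MonotoneOn f' s) {a b : ℝ}
    (ha : a ∈ s) (hb : b ∈ s) : f a + f' a * (b - a) ≤ f b := by
  rcases le_total a b with hab | hba
  · have hsub : Icc a b ⊆ s := hs.ordConnected.out ha hb
    have key := (convex_Icc a b).mul_sub_le_image_sub_of_le_deriv (f := f) (C := f' a)
      (fun x hx => (hf x (hsub hx)).continuousAt.continuousWithinAt)
      (fun x hx => (hf x (hsub (interior_subset hx))).differentiableAt.differentiableWithinAt)
      (fun x hx => by
        rw [interior_Icc] at hx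
        rw [(hf x (hsub (Ioo_subset_Icc_self hx))).deriv]
        exact hf' ha (hsub (Ioo_subset_Icc_self hx)) hx.1.le)
      a (left_mem_Icc.2 hab) b (right_mem_Icc.2 hab) hab
    linarith
  · have hsub : Icc b a ⊆ s := hs.ordConnected.out hb ha
    have key := (convex_Icc b a).image_sub_le_mul_sub_of_deriv_le (f := f) (C := f' a)
      (fun x hx => (hf x (hsub hx)).continuousAt.continuousWithinAt)
      (fun x hx => (hf x (hsub (interior_subset hx))).differentiableAt.differentiableWithinAt)
      (fun x hx => by
        rw [interior_Icc] at hx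
        rw [(hf x (hsub (Ioo_subset_Icc_self hx))).deriv]
        exact hf' (hsub (Ioo_subset_Icc_self hx)) ha hx.2.le)
      b (left_mem_Icc.2 hba) a (right_mem_Icc.2 hba) hba
    linarith

theorem mul_rpow_sub_one_mul_sub_le_rpow_sub_rpow {q M x y : ℝ} (hq0 : 0 < q) (hq1 : q ≤ 1)
    (hx : 0 ≤ x) (hxy : x ≤ y) (hyM : y ≤ M) :
    q * M ^ (q - 1) * (y - x) ≤ y ^ q - x ^ q := by
  have hderiv : ∀ t ∈ Ioo 0 M, HasDerivAt (fun t : ℝ => t ^ q) (q * t ^ (q - 1)) t :=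
    fun t ht => Real.hasDerivAt_rpow_const (Or.inl ht.1.ne')
  refine (convex_Icc 0 M).mul_sub_le_image_sub_of_le_deriv
    (fun t ht => (Real.continuousAt_rpow_const _ _ (Or.inr hq0.le)).continuousWithinAt)
    (fun t ht => ?_) (fun t ht => ?_) x ⟨hx, hxy.trans hyM⟩ y ⟨hx.trans hxy, hyM⟩ hxy
  · rw [interior_Icc] at ht
    exact (hderiv t ht).differentiableAt.differentiableWithinAt
  · rw [interior_Icc] at ht
    rw [(hderiv t ht).deriv]
    exact mul_le_mul_of_nonneg_left (Real.rpow_le_rpow_of_nonpos ht.1 ht.2.le (by linarith))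
      hq0.le

theorem abs_rpow_sub_two_mul_self (p x : ℝ) : |x| ^ (p - 2) * x = Real.sign x * |x| ^ (p - 1) := by
  rcases lt_trichotomy x 0 with hx | rfl | hx
  · rw [Real.sign_of_neg hx, abs_of_neg hx, show p - 1 = (p - 2) + 1 by ring,
      Real.rpow_add_one (by linarith)]
    ring
  · simp
  · rw [Real.sign_of_pos hx, abs_of_pos hx, show p - 1 = (p - 2) + 1 by ring,
      Real.rpow_add_one hx.ne']
    ring

theorem abs_rpow_sub_two_mul_self_of_nonneg {p x : ℝ} (hp : 1 < p) (hx : 0 ≤ x) :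
    |x| ^ (p - 2) * x = x ^ (p - 1) := by
  rcases hx.eq_or_lt with rfl | hx
  · simp [Real.zero_rpow (by linarith : p - 1 ≠ 0)]
  · rw [abs_rpow_sub_two_mul_self, Real.sign_of_pos hx, abs_of_pos hx, one_mul]

theorem mul_sub_le_abs_rpow_sub_two_mul_self_sub {p M x y : ℝ} (hp1 : 1 < p) (hp2 : p ≤ 2)
    (hxM : |x| ≤ M) (hyM : |y| ≤ M) (hxy : x ≤ y) :
    (p - 1) * M ^ (p - 2) * (y - x) ≤ |y| ^ (p - 2) * y - |x| ^ (p - 2) * x := by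
  have hq0 : 0 < p - 1 := by linarith
  have hq1 : p - 1 ≤ 1 := by linarith
  have hexp : p - 1 - 1 = p - 2 := by ring
  have nonneg : ∀ {x y : ℝ}, 0 ≤ x → x ≤ y → y ≤ M →
      (p - 1) * M ^ (p - 2) * (y - x) ≤ |y| ^ (p - 2) * y - |x| ^ (p - 2) * x := by
    intro x y hx hxy hyM
    rw [abs_rpow_sub_two_mul_self_of_nonneg hp1 hx,
      abs_rpow_sub_two_mul_self_of_nonneg hp1 (hx.trans hxy), ← hexp]
    exact mul_rpow_sub_one_mul_sub_le_rpow_sub_rpow hq0 hq1 hx hxy hyM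
  have odd : ∀ t : ℝ, |-t| ^ (p - 2) * -t = -(|t| ^ (p - 2) * t) := fun t => by
    rw [abs_neg]; ring
  rcases le_total 0 x with hx | hx
  · exact nonneg hx hxy (le_abs_self y |>.trans hyM)
  rcases le_total y 0 with hy | hy
  · have := nonneg (neg_nonneg.2 hy) (neg_le_neg hxy) (neg_le_abs x |>.trans hxM)
    rw [odd, odd] at this
    linarith
  · have hneg := nonneg le_rfl (neg_nonneg.2 hx) (neg_le_abs x |>.trans hxM)
    have hpos := nonneg le_rfl hy (le_abs_self y |>.trans hyM)
    rw [odd] at hneg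
    linarith

noncomputable def bregmanAbsRpow (p a b : ℝ) : ℝ :=
  |b| ^ p - |a| ^ p - p * Real.sign a * |a| ^ (p - 1) * (b - a)

theorem mul_sq_le_bregmanAbsRpow {p M a b : ℝ} (hp1 : 1 < p) (hp2 : p ≤ 2)
    (haM : |a| ≤ M) (hbM : |b| ≤ M) :
    p * (p - 1) / 2 * M ^ (p - 2) * (b - a) ^ 2 ≤ bregmanAbsRpow p a b := by
  set c := p * (p - 1) * M ^ (p - 2)
  -- `|x|^p - c/2 · x²` is convex on `[-M, M]`; the claim is its tangent inequality at `a`.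
  have hmono : MonotoneOn (fun x => p * (|x| ^ (p - 2) * x) - c * x) (Icc (-M) M) :=
    fun x hx y hy hxy => by
      have gap := mul_sub_le_abs_rpow_sub_two_mul_self_sub hp1 hp2 (abs_le.2 hx) (abs_le.2 hy) hxy
      have := mul_le_mul_of_nonneg_left gap (by linarith : (0 : ℝ) ≤ p)
      simp only [c]
      linarith
  have hderiv : ∀ x ∈ Icc (-M) M, HasDerivAt (fun x => |x| ^ p - c / 2 * x ^ 2)
      (p * (|x| ^ (p - 2) * x) - c * x) x := fun x _ =>
    ((hasDerivAt_abs_rpow x hp1).sub ((hasDerivAt_pow 2 x).const_mul (c / 2))).congr_deriv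
      (by ring)
  have tangent := add_deriv_mul_sub_le_of_monotoneOn (convex_Icc (-M) M) hderiv hmono
    (abs_le.1 haM) (abs_le.1 hbM)
  simp only [abs_rpow_sub_two_mul_self] at tangent
  unfold bregmanAbsRpow
  linear_combination tangent

theorem bregmanAbsRpow_mul {p c : ℝ} (hc : 0 < c) (a b : ℝ) :
    bregmanAbsRpow p (c * a) (c * b) = c ^ p * bregmanAbsRpow p a b := by
  have hcp : c ^ (p - 1) * c = c ^ p := by rw [← Real.rpow_add_one hc.ne', sub_add_cancel]
  have hsign : Real.sign (c * a) = Real.sign a := by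
    rcases lt_trichotomy a 0 with ha | rfl | ha
    · rw [Real.sign_of_neg ha, Real.sign_of_neg (mul_neg_of_pos_of_neg hc ha)]
    · rw [mul_zero]
    · rw [Real.sign_of_pos ha, Real.sign_of_pos (mul_pos hc ha)]
  simp only [bregmanAbsRpow, abs_mul, abs_of_pos hc, Real.mul_rpow hc.le (abs_nonneg _), hsign]
  linear_combination (p * Real.sign a * |a| ^ (p - 1) * (a - b)) * hcp

theorem mul_sq_le_rpow_mul_bregmanAbsRpow {p M c a b : ℝ} (hp1 : 1 < p) (hp2 : p ≤ 2)
    (hc : 0 < c) (haM : c * |a| ≤ M) (hbM : c * |b| ≤ M) :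
    p * (p - 1) / 2 * M ^ (p - 2) * (c ^ 2 * (b - a) ^ 2) ≤ c ^ p * bregmanAbsRpow p a b := by
  rw [← bregmanAbsRpow_mul hc]
  have := mul_sq_le_bregmanAbsRpow hp1 hp2 (a := c * a) (b := c * b) (M := M)
    (by rwa [abs_mul, abs_of_pos hc]) (by rwa [abs_mul, abs_of_pos hc])
  linear_combination this

theorem ENNReal.ofReal_mul_tsum_le_tsum_ofReal {ι : Type*} {K : ℝ} (hK : 0 ≤ K) {f g : ι → ℝ}
    (h : ∀ i, K * f i ≤ g i) :
    ENNReal.ofReal K * ∑' i, ENNReal.ofReal (f i) ≤ ∑' i, ENNReal.ofReal (g i) := by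
  rw [← ENNReal.tsum_mul_left]
  exact ENNReal.tsum_le_tsum fun i => (ENNReal.ofReal_mul hK).symm.trans_le
    (ENNReal.ofReal_le_ofReal (h i))

theorem besovNorm_rpow_self {Λ : Type*} (d : ℝ) (lev : Λ → ℕ) (s : ℝ) {p : ℝ} (hp : 0 < p)
    (u : Λ → ℝ) :
    besovNorm d lev s p u ^ p = ∑' lam, ENNReal.ofReal
      ((2 : ℝ) ^ (p * (s + d * (1 / 2 - 1 / p)) * (lev lam : ℝ)) * |u lam| ^ p) := by
  rw [besovNorm, ← ENNReal.rpow_mul, one_div_mul_cancel hp.ne', ENNReal.rpow_one]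

theorem besovNorm_two_rpow_two {Λ : Type*} (d : ℝ) (lev : Λ → ℕ) (s : ℝ) (u : Λ → ℝ) :
    besovNorm d lev s 2 u ^ (2 : ℝ) =
      ∑' lam, ENNReal.ofReal ((2 : ℝ) ^ (2 * s * (lev lam : ℝ)) * u lam ^ 2) := by
  rw [besovNorm_rpow_self d lev s two_pos]
  norm_num

theorem bregman_lower_bound_general {Λ : Type*} (d : ℝ) (lev : Λ → ℕ)
    (pR : ℝ) (hpR1 : 1 < pR) (hpR2 : pR ≤ 2)
    (τ : ℝ)
    (C L : ℝ) (hC : 0 < C) (hL : 0 < L)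
    (udag v : Λ → ℝ)
    (hbound : ∀ lam : Λ, (2 : ℝ) ^ (τ * (lev lam : ℝ)) * |udag lam| < C)
    (hdiff : ∀ lam : Λ, (2 : ℝ) ^ (τ * (lev lam : ℝ)) * |v lam - udag lam| < L) :
    ∃ K : ℝ, 0 < K ∧
      ENNReal.ofReal K *
          (∑' lam : Λ, ENNReal.ofReal
            ((2 : ℝ) ^ (2 * τ * (lev lam : ℝ)) * (v lam - udag lam) ^ 2)) ≤
        ∑' lam : Λ, ENNReal.ofReal
          ((2 : ℝ) ^ (pR * τ * (lev lam : ℝ)) *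
            (|v lam| ^ pR - |udag lam| ^ pR -
              pR * Real.sign (udag lam) * |udag lam| ^ (pR - 1) * (v lam - udag lam))) ∧
      (∑' lam : Λ, ENNReal.ofReal
          ((2 : ℝ) ^ (2 * τ * (lev lam : ℝ)) * (v lam - udag lam) ^ 2)) =
        (besovNorm d lev τ 2 (fun lam => v lam - udag lam)) ^ (2 : ℝ) := by
  have hK : 0 < pR * (pR - 1) / 2 * (C + L) ^ (pR - 2) :=
    mul_pos (by nlinarith) (Real.rpow_pos_of_pos (by linarith) _)
  refine ⟨_, hK, ENNReal.ofReal_mul_tsum_le_tsum_ofReal hK.le fun lam => ?_,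
    (besovNorm_two_rpow_two d lev τ _).symm⟩
  set c := (2 : ℝ) ^ (τ * (lev lam : ℝ))
  have hc : 0 < c := Real.rpow_pos_of_pos two_pos _
  have hc2 : c ^ 2 = (2 : ℝ) ^ (2 * τ * (lev lam : ℝ)) := by
    rw [← Real.rpow_natCast, ← Real.rpow_mul zero_le_two]; ring_nf
  have hcp : c ^ pR = (2 : ℝ) ^ (pR * τ * (lev lam : ℝ)) := by
    rw [← Real.rpow_mul zero_le_two]; ring_nf
  have hv : c * |v lam| ≤ C + L := by
    have := abs_sub_abs_le_abs_sub (v lam) (udag lam)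
    nlinarith [hbound lam, hdiff lam]
  rw [← hc2, ← hcp]
  exact mul_sq_le_rpow_mul_bregmanAbsRpow hpR1 hpR2 hc (by linarith [hbound lam]) hv

/-- Bregman-distance lower bound: if `1 < p_R ≤ 2`, `τ = s_R + d(1/2 − 1/p_R)`, and the scaled
coordinates satisfy `2^{τℓ(λ)}|u†_λ| < C` and `2^{τℓ(λ)}|v_λ − u†_λ| < L`, then there is
`K = K(p_R, C, L) > 0` with
`∑_λ 2^{p_R τ ℓ(λ)}(|v_λ|^{p_R} − |u†_λ|^{p_R} − p_R sign(u†_λ)|u†_λ|^{p_R−1}(v_λ − u†_λ))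
  ≥ K ∑_λ 2^{2τℓ(λ)}|v_λ − u†_λ|² = K‖v − u†‖²_{H^τ}`. -/
theorem bregman_lower_bound {Λ : Type*} [Countable Λ] (d : ℝ) (lev : Λ → ℕ)
    (sR pR : ℝ) (hd : 0 < d) (hpR1 : 1 < pR) (hpR2 : pR ≤ 2)
    (τ : ℝ) (hτ : τ = sR + d * (1 / 2 - 1 / pR))
    (C L : ℝ) (hC : 0 < C) (hL : 0 < L)
    (udag v : Λ → ℝ)
    (hbound : ∀ lam : Λ, (2 : ℝ) ^ (τ * (lev lam : ℝ)) * |udag lam| < C)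
    (hdiff : ∀ lam : Λ, (2 : ℝ) ^ (τ * (lev lam : ℝ)) * |v lam - udag lam| < L) :
    ∃ K : ℝ, 0 < K ∧
      ENNReal.ofReal K *
          (∑' lam : Λ, ENNReal.ofReal
            ((2 : ℝ) ^ (2 * τ * (lev lam : ℝ)) * (v lam - udag lam) ^ 2)) ≤
        ∑' lam : Λ, ENNReal.ofReal
          ((2 : ℝ) ^ (pR * τ * (lev lam : ℝ)) *
            (|v lam| ^ pR - |udag lam| ^ pR -
              pR * Real.sign (udag lam) * |udag lam| ^ (pR - 1) * (v lam - udag lam))) ∧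
      (∑' lam : Λ, ENNReal.ofReal
          ((2 : ℝ) ^ (2 * τ * (lev lam : ℝ)) * (v lam - udag lam) ^ 2)) =
        (besovNorm d lev τ 2 (fun lam => v lam - udag lam)) ^ (2 : ℝ) :=
  bregman_lower_bound_general d lev pR hpR1 hpR2 τ C L hC hL udag v hbound hdiff
end
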